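/- Let x ∈ X and suppose there is a countable ordinal α such that for every open V ⊆ G, the set V·x is Π⁰_α. Then for all y ∈ X and open nonempty V,W ⊆ G, (y,W) ≤_α (x,V) implies (y,W) ≤_β (x,V) for every countable ordinal β. Consequently, δ(x) ≤ α + 1. -/

import Mathlib

open Set

variable {G X : Type*}

open Classical in
/-- Hjorth's relation `(x₀,V₀) ≤_α (x₁,V₁)`. -/
noncomputable def HLe [Group G] [TopologicalSpace G] [TopologicalSpace X] [MulAction G X]
    (α : Ordinal) (x₀ : X) (V₀ : Set G) (x₁ : X) (V₁ : Set G) : Prop :=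
  if α ≤ 1 then
    closure ((· • x₀) '' V₀) ⊆ closure ((· • x₁) '' V₁)
  else if h : ∃ β, α = β + 1 then
    ∀ W₀ : Set G, IsOpen W₀ → W₀.Nonempty → W₀ ⊆ V₀ →
      ∃ W₁ : Set G, IsOpen W₁ ∧ W₁.Nonempty ∧ W₁ ⊆ V₁ ∧ HLe h.choose x₁ W₁ x₀ W₀
  else
    ∀ β, 1 ≤ β → β < α → HLe β x₀ V₀ x₁ V₁
termination_by α
decreasing_by
  · conv_rhs => rw [h.choose_spec]
    exact lt_of_lt_of_le (Order.lt_succ _) (le_of_eq (Ordinal.add_one_eq_succ _).symm)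
  · assumption

open Classical in
/-- Level `α` of the `Π⁰` Borel hierarchy (`Π⁰_1` = closed sets). -/
noncomputable def Pi0 {Y : Type*} [TopologicalSpace Y] (α : Ordinal) : Set (Set Y) :=
  if α ≤ 1 then {A | IsClosed A}
  else {A | ∃ f : ℕ → Set Y,
        (∀ n, ∃ β, ∃ _ : 1 ≤ β, ∃ _ : β < α, f n ∈ Pi0 β) ∧ A = ⋂ n, (f n)ᶜ}
termination_by α
decreasing_by assumption

/-- The Vaught transform `A^{*W}`. -/
def vaughtStar [Group G] [TopologicalSpace G] [MulAction G X]
    (A : Set X) (W : Set G) : Set X :=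
  {x | IsMeagre (W \ {g : G | g • x ∈ A})}

/-- Hjorth's equivalence relation `x ≡_α y`. -/
def HEquiv [Group G] [TopologicalSpace G] [TopologicalSpace X] [MulAction G X]
    (α : Ordinal) (x y : X) : Prop :=
  (∀ V : Set G, IsOpen V → V.Nonempty →
      ∃ W : Set G, IsOpen W ∧ W.Nonempty ∧ HLe α y W x V) ∧
  (∀ V : Set G, IsOpen V → V.Nonempty →
      ∃ W : Set G, IsOpen W ∧ W.Nonempty ∧ HLe α x W y V)

/-- The Hjorth rank `δ(x)`, relative to a countable basis `B₀`. -/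
noncomputable def hjorthRank [Group G] [TopologicalSpace G] [TopologicalSpace X] [MulAction G X]
    (B₀ : Set (Set G)) (x : X) : Ordinal :=
  sInf {α | ∀ V₀ ∈ B₀, ∀ V₁ ∈ B₀, ∀ W₀ ∈ B₀, ∀ W₁ ∈ B₀,
    closure W₀ ⊆ V₀ → closure V₁ ⊆ W₁ →
    HLe α x V₀ x V₁ → HLe (α + 1) x W₀ x W₁}

open MeasureTheory Topology

lemma ord_add_one_inj {a b : Ordinal} (h : a + 1 = b + 1) : a = b := by
  rwa [Ordinal.add_one_eq_succ, Ordinal.add_one_eq_succ, Order.succ_eq_succ_iff] at h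

section Unfold

variable [Group G] [TopologicalSpace G] [TopologicalSpace X] [MulAction G X]

lemma HLe_base {α : Ordinal} (hα : α ≤ 1) {x₀ x₁ : X} {V₀ V₁ : Set G} :
    HLe α x₀ V₀ x₁ V₁ ↔ closure ((· • x₀) '' V₀) ⊆ closure ((· • x₁) '' V₁) := by
  rw [HLe, if_pos hα]

lemma HLe_succ {γ : Ordinal} (hγ : 1 ≤ γ) {x₀ x₁ : X} {V₀ V₁ : Set G} :
    HLe (γ + 1) x₀ V₀ x₁ V₁ ↔
      ∀ W₀ : Set G, IsOpen W₀ → W₀.Nonempty → W₀ ⊆ V₀ →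
        ∃ W₁ : Set G, IsOpen W₁ ∧ W₁.Nonempty ∧ W₁ ⊆ V₁ ∧ HLe γ x₁ W₁ x₀ W₀ := by
  have h1 : ¬ (γ + 1 ≤ 1) := by
    rw [not_le, Ordinal.add_one_eq_succ]
    exact lt_of_le_of_lt hγ (Order.lt_succ γ)
  have hex : ∃ β : Ordinal, γ + 1 = β + 1 := ⟨γ, rfl⟩
  have hc : hex.choose = γ := (ord_add_one_inj hex.choose_spec).symm
  rw [HLe, if_neg h1, dif_pos hex, hc]

lemma HLe_limit {α : Ordinal} (h1 : 1 < α) (hs : ¬ ∃ β : Ordinal, α = β + 1)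
    {x₀ x₁ : X} {V₀ V₁ : Set G} :
    HLe α x₀ V₀ x₁ V₁ ↔ ∀ β, 1 ≤ β → β < α → HLe β x₀ V₀ x₁ V₁ := by
  rw [HLe, if_neg (not_le.2 h1), dif_neg hs]

end Unfold

lemma Pi0_base {Y : Type*} [TopologicalSpace Y] {α : Ordinal} (hα : α ≤ 1) :
    (Pi0 α : Set (Set Y)) = {A | IsClosed A} := by
  rw [Pi0, if_pos hα]

lemma Pi0_gt {Y : Type*} [TopologicalSpace Y] {α : Ordinal} (hα : 1 < α) :
    (Pi0 α : Set (Set Y)) = {A | ∃ f : ℕ → Set Y,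
        (∀ n, ∃ β, ∃ _ : 1 ≤ β, ∃ _ : β < α, f n ∈ Pi0 β) ∧ A = ⋂ n, (f n)ᶜ} := by
  rw [Pi0, if_neg (not_le.2 hα)]

lemma Pi0_measurable {Y : Type*} [TopologicalSpace Y] :
    ∀ (β : Ordinal) (B : Set Y), B ∈ (Pi0 β : Set (Set Y)) → MeasurableSet[borel Y] B := by
  intro β
  induction β using Ordinal.induction with
  | _ β IH =>
    intro B hB
    letI : MeasurableSpace Y := borel Y
    haveI : BorelSpace Y := ⟨rfl⟩
    rcases le_or_gt β 1 with hb | hb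
    · rw [Pi0_base hb] at hB
      exact hB.measurableSet
    · rw [Pi0_gt hb] at hB
      obtain ⟨f, hf, rfl⟩ := hB
      refine MeasurableSet.iInter (fun n => ?_)
      obtain ⟨γ, _, hγβ, hfn⟩ := hf n
      exact (IH γ hγβ _ hfn).compl

lemma Pi0_mono {Y : Type*} [TopologicalSpace Y] [TopologicalSpace.PseudoMetrizableSpace Y]
    {β γ : Ordinal} (h : β ≤ γ) : (Pi0 β : Set (Set Y)) ⊆ Pi0 γ := by
  intro B hB
  rcases le_or_gt γ 1 with hγ | hγ
  · rwa [Pi0_base (le_trans h hγ), ← Pi0_base hγ] at hB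
  rcases le_or_gt β 1 with hβ | hβ
  · rw [Pi0_base hβ] at hB
    rw [Pi0_gt hγ]
    letI : PseudoMetricSpace Y := TopologicalSpace.pseudoMetrizableSpacePseudoMetric Y
    obtain ⟨F, hFc, -, hFU, -⟩ := hB.isOpen_compl.exists_iUnion_isClosed
    refine ⟨F, fun n => ⟨1, le_rfl, hγ, ?_⟩, ?_⟩
    · rw [Pi0_base le_rfl]; exact hFc n
    · rw [← compl_iUnion, hFU, compl_compl]
  · rw [Pi0_gt hβ] at hB
    rw [Pi0_gt hγ]
    obtain ⟨f, hf, rfl⟩ := hB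
    exact ⟨f, fun n => by
      obtain ⟨δ, h1, h2, h3⟩ := hf n
      exact ⟨δ, h1, lt_of_lt_of_le h2 h, h3⟩, rfl⟩

section Meagre

variable {Y : Type*} [TopologicalSpace Y]

lemma open_not_isMeagre [BaireSpace Y] {S : Set Y} (hS : IsOpen S) (hne : S.Nonempty) :
    ¬ IsMeagre S := by
  intro h
  have hd : Dense Sᶜ := dense_of_mem_residual h
  have he : Sᶜ = Set.univ := by
    rw [← hS.isClosed_compl.closure_eq]
    exact hd.closure_eq
  rcases hne with ⟨a, ha⟩
  exact (he ▸ Set.mem_univ a : a ∈ Sᶜ) ha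

lemma inter_nonempty_of_isMeagre_diff [BaireSpace Y] {S T : Set Y} (hS : IsOpen S)
    (hne : S.Nonempty) (h : IsMeagre (S \ T)) : (S ∩ T).Nonempty := by
  by_contra hc
  rw [Set.not_nonempty_iff_eq_empty] at hc
  refine open_not_isMeagre hS hne (h.mono (s := S \ T) fun a ha => ⟨ha, fun hT => ?_⟩)
  have : a ∈ S ∩ T := ⟨ha, hT⟩
  simp [hc] at this

lemma subset_closure_inter [BaireSpace Y] {S T : Set Y} (hS : IsOpen S)
    (h : IsMeagre (S \ T)) : S ⊆ closure (S ∩ T) := by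
  intro g hg
  rw [mem_closure_iff]
  intro o ho hgo
  have h1 : IsMeagre ((o ∩ S) \ T) := h.mono (s := S \ T) (fun a ha => ⟨ha.1.2, ha.2⟩)
  obtain ⟨a, ⟨hao, haS⟩, haT⟩ :=
    inter_nonempty_of_isMeagre_diff (ho.inter hS) ⟨g, hgo, hg⟩ h1
  exact ⟨a, hao, haS, haT⟩

lemma IsMeagre.union' {s t : Set Y} (hs : IsMeagre s) (ht : IsMeagre t) :
    IsMeagre (s ∪ t) := by
  rw [IsMeagre, Set.compl_union]
  exact Filter.inter_mem hs ht

lemma localize {W T : Set Y} (hW : IsOpen W) (hT : BaireMeasurableSet T)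
    (h : ¬ IsMeagre (W ∩ T)) :
    ∃ W₀ : Set Y, IsOpen W₀ ∧ W₀.Nonempty ∧ W₀ ⊆ W ∧ IsMeagre (W₀ \ T) := by
  obtain ⟨U, hU, hTU⟩ := hT.residualEq_isOpen
  rw [Filter.eventuallyEq_set] at hTU
  have hUT : IsMeagre (U \ T) := by
    rw [IsMeagre]
    filter_upwards [hTU] with a ha
    intro haUT
    exact haUT.2 (ha.2 haUT.1)
  have hTU' : IsMeagre (T \ U) := by
    rw [IsMeagre]
    filter_upwards [hTU] with a ha
    intro haTU
    exact haTU.2 (ha.1 haTU.1)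
  refine ⟨U ∩ W, hU.inter hW, ?_, Set.inter_subset_right, ?_⟩
  · by_contra hne
    rw [Set.not_nonempty_iff_eq_empty] at hne
    refine h (hTU'.mono (s := T \ U) fun a ha => ⟨ha.2, fun haU => ?_⟩)
    have : a ∈ U ∩ W := ⟨haU, ha.1⟩
    simp [hne] at this
  · exact hUT.mono (s := U \ T) (fun a ha => ⟨ha.1.1, ha.2⟩)

end Meagre

section Smul

variable [Group G] [TopologicalSpace G] [TopologicalSpace X] [MulAction G X]
  [ContinuousSMul G X] [BaireSpace G]

lemma closure_smul_subset {y : X} {W : Set G} {A : Set X} (hW : IsOpen W)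
    (h : IsMeagre (W \ {g : G | g • y ∈ A})) :
    closure ((· • y) '' W) ⊆ closure A := by
  refine closure_minimal ?_ isClosed_closure
  have h1 : W ⊆ closure (W ∩ {g | g • y ∈ A}) := subset_closure_inter hW h
  rintro p ⟨g, hg, rfl⟩
  have hc : Continuous (fun g : G => g • y) := continuous_id.smul continuous_const
  have h2 : g • y ∈ (· • y) '' closure (W ∩ {g | g • y ∈ A}) :=
    Set.mem_image_of_mem _ (h1 hg)
  have h3 := image_closure_subset_closure_image (f := fun g : G => g • y) hc h2
  refine closure_mono ?_ h3
  rintro _ ⟨k, hk, rfl⟩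
  exact hk.2

end Smul

section Key

variable [Group G] [TopologicalSpace G] [IsTopologicalGroup G]
  [TopologicalSpace X] [MulAction G X] [ContinuousSMul G X] [BaireSpace G]

lemma key_up :
    ∀ (β : Ordinal), 1 ≤ β → ∀ (x y : X) (V W : Set G), IsOpen V → IsOpen W → W.Nonempty →
      IsMeagre (W \ {g : G | g • y ∈ (· • x) '' V}) → HLe β y W x V := by
  intro β
  induction β using Ordinal.induction with
  | _ β IH =>
  intro hβ1 x y V W hV hW hWne hmg
  rcases le_or_gt β 1 with hb | hb
  · rw [HLe_base hb]
    exact closure_smul_subset hW hmg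
  by_cases hs : ∃ γ : Ordinal, β = γ + 1
  · obtain ⟨γ, rfl⟩ := hs
    have hγ1 : 1 ≤ γ := by rwa [Ordinal.add_one_eq_succ, Order.lt_succ_iff] at hb
    have hγlt : γ < γ + 1 := by rw [Ordinal.add_one_eq_succ]; exact Order.lt_succ γ
    rw [HLe_succ hγ1]
    intro W₀ hW₀ hW₀ne hW₀W
    have hmg₀ : IsMeagre (W₀ \ {g : G | g • y ∈ (· • x) '' V}) :=
      hmg.mono (s := W \ {g : G | g • y ∈ (· • x) '' V}) (fun a ha => ⟨hW₀W ha.1, ha.2⟩)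
    obtain ⟨g, hgW₀, hgy⟩ := inter_nonempty_of_isMeagre_diff hW₀ hW₀ne hmg₀
    obtain ⟨h, hhV, hhx⟩ := hgy
    have hhV₁ : h ∈ V ∩ (· * (g⁻¹ * h)) '' W₀ :=
      ⟨hhV, g, hgW₀, by show g * (g⁻¹ * h) = h; rw [mul_inv_cancel_left]⟩
    have hV₁o : IsOpen (V ∩ (· * (g⁻¹ * h)) '' W₀) := hV.inter ((isOpenMap_mul_right _) W₀ hW₀)
    refine ⟨V ∩ (· * (g⁻¹ * h)) '' W₀, hV₁o, ⟨h, hhV₁⟩, Set.inter_subset_left, ?_⟩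
    apply IH γ hγlt hγ1 y x W₀ _ hW₀ hV₁o ⟨h, hhV₁⟩
    have hempty : (V ∩ (· * (g⁻¹ * h)) '' W₀) \ {k : G | k • x ∈ (· • y) '' W₀} = ∅ := by
      rw [Set.eq_empty_iff_forall_notMem]
      rintro k ⟨⟨hkV, w, hw, rfl⟩, hk2⟩
      refine hk2 ⟨w, hw, ?_⟩
      show w • y = (w * (g⁻¹ * h)) • x
      rw [mul_smul, mul_smul, (show h • x = g • y from hhx), inv_smul_smul]
    rw [hempty]
    exact IsMeagre.empty
  · rw [HLe_limit hb hs]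
    intro δ hδ1 hδβ
    exact IH δ hδβ hδ1 x y V W hV hW hWne hmg

omit [IsTopologicalGroup G] in
lemma key_down [TopologicalSpace.PseudoMetrizableSpace X] :
    ∀ (β : Ordinal) (B : Set X), B ∈ (Pi0 β : Set (Set X)) →
      ∀ (x y : X) (V W : Set G), IsOpen V → IsOpen W → HLe β y W x V →
      IsMeagre (V \ {g : G | g • x ∈ B}) → IsMeagre (W \ {g : G | g • y ∈ B}) := by
  intro β
  induction β using Ordinal.induction with
  | _ β IH =>
  intro B hB x y V W hV hW hle hx
  rcases le_or_gt β 1 with hb | hb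
  · rw [Pi0_base hb] at hB
    rw [HLe_base hb] at hle
    have h1 : closure ((· • x) '' V) ⊆ B := by
      have h2 := closure_smul_subset hV hx
      rwa [hB.closure_eq] at h2
    have hempty : W \ {g : G | g • y ∈ B} = ∅ := by
      rw [Set.eq_empty_iff_forall_notMem]
      rintro g ⟨hgW, hg2⟩
      exact hg2 (h1 (hle (subset_closure (Set.mem_image_of_mem _ hgW))))
    rw [hempty]
    exact IsMeagre.empty
  rw [Pi0_gt hb] at hB
  obtain ⟨f, hf, rfl⟩ := hB
  have hgoal : W \ {g : G | g • y ∈ ⋂ n, (f n)ᶜ} = ⋃ n, (W ∩ {g : G | g • y ∈ f n}) := by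
    ext a
    simp only [Set.mem_diff, Set.mem_setOf_eq, Set.mem_iInter, Set.mem_compl_iff, not_forall,
      not_not, Set.mem_iUnion, Set.mem_inter_iff]
    tauto
  rw [hgoal]
  refine isMeagre_iUnion fun n => ?_
  by_contra hmn
  obtain ⟨δ, hδ1, hδβ, hfn⟩ := hf n
  have hTb : BaireMeasurableSet {g : G | g • y ∈ f n} := by
    letI : MeasurableSpace G := borel G
    haveI : BorelSpace G := ⟨rfl⟩
    letI : MeasurableSpace X := borel X
    haveI : BorelSpace X := ⟨rfl⟩
    have hc : Continuous (fun g : G => g • y) := continuous_id.smul continuous_const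
    exact (hc.measurable (Pi0_measurable δ (f n) hfn)).baireMeasurableSet
  obtain ⟨W₀, hW₀o, hW₀ne, hW₀W, hW₀mg⟩ := localize hW hTb hmn
  have key : ∃ V₁ : Set G, IsOpen V₁ ∧ V₁.Nonempty ∧ V₁ ⊆ V ∧
      IsMeagre (V₁ \ {k : G | k • x ∈ f n}) := by
    by_cases hs : ∃ γ : Ordinal, β = γ + 1
    · obtain ⟨γ, rfl⟩ := hs
      have hγ1 : 1 ≤ γ := by rwa [Ordinal.add_one_eq_succ, Order.lt_succ_iff] at hb
      have hγlt : γ < γ + 1 := by rw [Ordinal.add_one_eq_succ]; exact Order.lt_succ γ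
      rw [HLe_succ hγ1] at hle
      obtain ⟨V₁, hV₁o, hV₁ne, hV₁V, hle₁⟩ := hle W₀ hW₀o hW₀ne hW₀W
      have hδγ : δ ≤ γ := by rwa [Ordinal.add_one_eq_succ, Order.lt_succ_iff] at hδβ
      exact ⟨V₁, hV₁o, hV₁ne, hV₁V,
        IH γ hγlt (f n) (Pi0_mono hδγ hfn) y x W₀ V₁ hW₀o hV₁o hle₁ hW₀mg⟩
    · have hsucc : δ + 1 < β := by
        have h1 : δ + 1 ≤ β := by
          rw [Ordinal.add_one_eq_succ]; exact Order.succ_le_of_lt hδβ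
        rcases h1.lt_or_eq with h | h
        · exact h
        · exact absurd ⟨δ, h.symm⟩ hs
      rw [HLe_limit hb hs] at hle
      have hle' := hle (δ + 1)
        (le_trans hδ1 (by rw [Ordinal.add_one_eq_succ]; exact Order.le_succ δ)) hsucc
      rw [HLe_succ hδ1] at hle'
      obtain ⟨V₁, hV₁o, hV₁ne, hV₁V, hle₁⟩ := hle' W₀ hW₀o hW₀ne hW₀W
      exact ⟨V₁, hV₁o, hV₁ne, hV₁V,
        IH δ hδβ (f n) hfn y x W₀ V₁ hW₀o hV₁o hle₁ hW₀mg⟩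
  obtain ⟨V₁, hV₁o, hV₁ne, hV₁V, hmgV₁⟩ := key
  have h2 : IsMeagre (V₁ \ {k : G | k • x ∉ f n}) := by
    refine hx.mono (s := V \ {g : G | g • x ∈ ⋂ n, (f n)ᶜ}) fun k hk => ⟨hV₁V hk.1, fun hmem => ?_⟩
    exact (Set.mem_iInter.1 hmem n) (not_not.1 hk.2)
  have h3 : IsMeagre V₁ := by
    refine (hmgV₁.union' h2).mono fun k hk => ?_
    by_cases hmem : k • x ∈ f n
    · exact Or.inr ⟨hk, fun hc => hc hmem⟩
    · exact Or.inl ⟨hk, hmem⟩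
  exact open_not_isMeagre hV₁o hV₁ne h3

end Key

theorem stmt17 [Group G] [TopologicalSpace G] [IsTopologicalGroup G] [PolishSpace G]
    [TopologicalSpace X] [PolishSpace X] [MulAction G X] [ContinuousSMul G X]
    (B₀ : Set (Set G)) (hB : TopologicalSpace.IsTopologicalBasis B₀)
    (hBc : B₀.Countable) (hBne : ∀ b ∈ B₀, b.Nonempty)
    (x : X) (α : Ordinal) (hα1 : 1 ≤ α) (hα : α < (Cardinal.aleph 1).ord)
    (hPi : ∀ V : Set G, IsOpen V → ((· • x) '' V) ∈ Pi0 α) :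
    (∀ (y : X) (V W : Set G), IsOpen V → V.Nonempty → IsOpen W → W.Nonempty →
        HLe α y W x V →
        ∀ β : Ordinal, 1 ≤ β → β < (Cardinal.aleph 1).ord → HLe β y W x V) ∧
      hjorthRank B₀ x ≤ α + 1 := by
  haveI : BaireSpace G := by
    letI := TopologicalSpace.upgradeIsCompletelyMetrizable G
    infer_instance
  have part1 : ∀ (y : X) (V W : Set G), IsOpen V → V.Nonempty → IsOpen W → W.Nonempty →
      HLe α y W x V → ∀ β : Ordinal, 1 ≤ β → β < (Cardinal.aleph 1).ord → HLe β y W x V := by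
    intro y V W hVo hVne hWo hWne hle β hβ1 _
    have hx : IsMeagre (V \ {g : G | g • x ∈ (· • x) '' V}) := by
      have hempty : V \ {g : G | g • x ∈ (· • x) '' V} = ∅ := by
        rw [Set.eq_empty_iff_forall_notMem]
        rintro g ⟨hgV, hg2⟩
        exact hg2 (Set.mem_image_of_mem _ hgV)
      rw [hempty]; exact IsMeagre.empty
    have hy := key_down α ((· • x) '' V) (hPi V hVo) x y V W hVo hWo hle hx
    exact key_up β hβ1 x y V W hVo hWo hWne hy
  refine ⟨part1, csInf_le' ?_⟩
  intro V₀ hV₀ V₁ hV₁ W₀ hW₀ W₁ hW₁ hcl₀ hcl₁ hle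
  have hα2 : 1 ≤ α + 1 := le_trans hα1 (by rw [Ordinal.add_one_eq_succ]; exact Order.le_succ α)
  rw [HLe_succ hα2]
  intro U₀ hU₀o hU₀ne hU₀W₀
  rw [HLe_succ hα1] at hle
  have hU₀V₀ : U₀ ⊆ V₀ := fun a ha => hcl₀ (subset_closure (hU₀W₀ ha))
  obtain ⟨A₁, hA₁o, hA₁ne, hA₁V₁, hleA⟩ := hle U₀ hU₀o hU₀ne hU₀V₀
  refine ⟨A₁, hA₁o, hA₁ne, fun a ha => hcl₁ (subset_closure (hA₁V₁ ha)), ?_⟩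
  have hx0 : IsMeagre (U₀ \ {g : G | g • x ∈ (· • x) '' U₀}) := by
    have hempty : U₀ \ {g : G | g • x ∈ (· • x) '' U₀} = ∅ := by
      rw [Set.eq_empty_iff_forall_notMem]
      rintro g ⟨hgV, hg2⟩
      exact hg2 (Set.mem_image_of_mem _ hgV)
    rw [hempty]; exact IsMeagre.empty
  have hy := key_down α ((· • x) '' U₀) (hPi U₀ hU₀o) x x U₀ A₁ hU₀o hA₁o hleA hx0
  exact key_up (α + 1) hα2 x x U₀ A₁ hU₀o hA₁o hA₁ne hy
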